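/- arXiv:1403.7852 — 3 statements merged into one kernel-verified Lean document; each statement's English description precedes it below -/
import Mathlib

section
/- Let d ≥ 1 and θ = (θ₁,…,θ_d) with θ_d < 0, and A(θ) = ∫₀^∞ exp(θ₁ x + ⋯ + θ_d x^d) dx. Then for each 1 ≤ i ≤ d, ∂_i A(θ) = ∂₁^i A(θ), i.e., differentiating once with respect to θ_i equals differentiating i times with respect to θ₁. -/
/-!
Write `P(x) = θ₁ x + ⋯ + θ_d x^d`. Since `θ_d < 0`, the lower-order terms are `o(x^d)`, so
`P(x) ≤ (θ_d / 2) x` for large `x` and every moment `∫₀^∞ xᵏ exp P(x) dx` converges. Differentiating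
in `θ_m` under the integral brings down a factor `x^m`; raising `θ_m` slightly keeps the leading
coefficient negative, which provides the integrable dominating function. Hence both sides equal
`∫₀^∞ x^i exp P(x) dx`.
-/

open MeasureTheory Real Filter Topology Asymptotics Finset

theorem eventually_sum_le_half_leading {d : ℕ} {a : ℕ → ℝ} (hd : 1 ≤ d) (ha : a d < 0) :
    ∀ᶠ x in atTop, ∑ j ∈ Icc 1 d, a j * x ^ j ≤ a d / 2 * x ^ d := by
  have hlower : (fun x : ℝ => ∑ j ∈ Ico 1 d, a j * x ^ j) =o[atTop] fun x => x ^ d :=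
    IsLittleO.fun_sum fun j hj =>
      (isLittleO_pow_pow_atTop_of_lt (mem_Ico.1 hj).2).const_mul_left _
  filter_upwards [hlower.def (c := -a d / 2) (by linarith), eventually_ge_atTop 0] with x hx hx0
  rw [Real.norm_eq_abs, Real.norm_of_nonneg (pow_nonneg hx0 _)] at hx
  rw [← add_sum_erase _ _ (mem_Icc.2 ⟨hd, le_rfl⟩), Icc_erase_right]
  linarith [le_abs_self (∑ j ∈ Ico 1 d, a j * x ^ j)]

theorem integrableOn_pow_mul_exp_sum {d : ℕ} {a : ℕ → ℝ} (hd : 1 ≤ d) (ha : a d < 0) (k : ℕ) :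
    IntegrableOn (fun x : ℝ => x ^ k * exp (∑ j ∈ Icc 1 d, a j * x ^ j)) (Set.Ioi 0) := by
  have hb : 0 < -a d / 4 := by linarith
  refine integrable_of_isBigO_exp_neg hb (by fun_prop) ?_
  have hexp : (fun x : ℝ => exp (∑ j ∈ Icc 1 d, a j * x ^ j)) =O[atTop]
      fun x => exp (a d / 2 * x) := by
    refine IsBigO.of_bound' ?_
    filter_upwards [eventually_sum_le_half_leading hd ha, eventually_ge_atTop 1] with x hx hx1
    simp only [Real.norm_eq_abs, abs_exp, exp_le_exp]
    exact hx.trans (mul_le_mul_of_nonpos_left (le_self_pow₀ hx1 (by omega)) (by linarith))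
  refine ((isLittleO_pow_exp_pos_mul_atTop k hb).isBigO.mul hexp).congr_right fun x => ?_
  rw [← exp_add]
  ring_nf

theorem hasDerivAt_integral_mul_exp_mul {α : Type*} [MeasurableSpace α] {μ : Measure α}
    {g u : α → ℝ} (hg : AEStronglyMeasurable g μ) (hu : AEStronglyMeasurable u μ)
    (hu_nonneg : ∀ᵐ x ∂μ, 0 ≤ u x) {t₀ t₁ : ℝ} (ht : t₀ < t₁)
    (hint₀ : Integrable (fun x => g x * exp (t₀ * u x)) μ)
    (hint₁ : Integrable (fun x => g x * u x * exp (t₁ * u x)) μ) :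
    HasDerivAt (fun t => ∫ x, g x * exp (t * u x) ∂μ) (∫ x, g x * u x * exp (t₀ * u x) ∂μ) t₀ := by
  have hexp_meas (t : ℝ) : AEStronglyMeasurable (fun x => exp (t * u x)) μ :=
    continuous_exp.comp_aestronglyMeasurable (hu.const_mul t)
  refine (hasDerivAt_integral_of_dominated_loc_of_deriv_le
    (F' := fun t x => g x * u x * exp (t * u x)) (Iio_mem_nhds ht)
    (.of_forall fun t => hg.mul (hexp_meas t)) hint₀ ((hg.mul hu).mul (hexp_meas t₀))
    ?_ hint₁.norm ?_).2
  · filter_upwards [hu_nonneg] with x hx t ht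
    simp only [norm_mul, Real.norm_of_nonneg hx, Real.norm_of_nonneg (exp_pos _).le]
    gcongr
    exact ht.le
  · refine .of_forall fun x t _ => ?_
    simpa [mul_assoc, mul_comm (u x)] using
      (((hasDerivAt_id t).mul_const (u x)).exp).const_mul (g x)

theorem iteratedDeriv_eqOn_of_hasDerivAt {𝕜 F : Type*} [NontriviallyNormedField 𝕜]
    [NormedAddCommGroup F] [NormedSpace 𝕜 F] {f : ℕ → 𝕜 → F} {U : Set 𝕜} (hU : IsOpen U)
    (hf : ∀ k, ∀ t ∈ U, HasDerivAt (f k) (f (k + 1) t) t) (k : ℕ) :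
    Set.EqOn (iteratedDeriv k (f 0)) (f k) U := by
  induction k with
  | zero => intro t _; rw [iteratedDeriv_zero]
  | succ k ih =>
    intro t ht
    rw [iteratedDeriv_succ, (eventuallyEq_of_mem (hU.mem_nhds ht) ih).deriv_eq]
    exact (hf k t ht).deriv

theorem sum_update_mul_pow {s : Finset ℕ} {m : ℕ} (hm : m ∈ s) (a : ℕ → ℝ) (t x : ℝ) :
    ∑ j ∈ s, Function.update a m t j * x ^ j = t * x ^ m + ∑ j ∈ s.erase m, a j * x ^ j := by
  rw [← add_sum_erase _ _ hm, Function.update_self]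
  congr 1
  exact sum_congr rfl fun j hj => by rw [Function.update_of_ne (ne_of_mem_erase hj)]

theorem continuous_update_apply (a : ℕ → ℝ) (m j : ℕ) :
    Continuous fun t : ℝ => Function.update a m t j :=
  (continuous_apply j).comp
    (continuous_const.update m continuous_id : Continuous fun t : ℝ => Function.update a m t)

noncomputable def expPolyMoment (d : ℕ) (a : ℕ → ℝ) (k : ℕ) : ℝ :=
  ∫ x in Set.Ioi (0 : ℝ), x ^ k * exp (∑ j ∈ Icc 1 d, a j * x ^ j)

theorem hasDerivAt_expPolyMoment_update {d m : ℕ} (hm : m ∈ Icc 1 d) (a : ℕ → ℝ) (k : ℕ)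
    {t₀ : ℝ} (ht₀ : Function.update a m t₀ d < 0) :
    HasDerivAt (fun t => expPolyMoment d (Function.update a m t) k)
      (expPolyMoment d (Function.update a m t₀) (k + m)) t₀ := by
  have hd : 1 ≤ d := (mem_Icc.1 hm).1.trans (mem_Icc.1 hm).2
  obtain ⟨t₁, ht₁, hlead⟩ : ∃ t₁ > t₀, Function.update a m t₁ d < 0 :=
    ((continuous_update_apply a m d).tendsto t₀ |>.eventually (gt_mem_nhds ht₀)).exists_gt
  set R : ℝ → ℝ := fun x => ∑ j ∈ (Icc 1 d).erase m, a j * x ^ j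
  have hsplit (n : ℕ) (t x : ℝ) : x ^ n * exp (∑ j ∈ Icc 1 d, Function.update a m t j * x ^ j)
      = x ^ n * exp (R x) * exp (t * x ^ m) := by
    rw [sum_update_mul_pow hm, exp_add]; ring
  have hsplit_deriv (t x : ℝ) : x ^ (k + m) * exp (∑ j ∈ Icc 1 d, Function.update a m t j * x ^ j)
      = x ^ k * exp (R x) * x ^ m * exp (t * x ^ m) := by
    rw [hsplit, pow_add]; ring
  simp_rw [expPolyMoment, hsplit_deriv, hsplit]
  refine hasDerivAt_integral_mul_exp_mul (g := fun x => x ^ k * exp (R x)) (u := (· ^ m))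
    (by fun_prop : Continuous _).aestronglyMeasurable
    (by fun_prop : Continuous _).aestronglyMeasurable ?_ ht₁ ?_ ?_
  · filter_upwards [ae_restrict_mem measurableSet_Ioi] with x hx using pow_nonneg (le_of_lt hx) m
  · simpa only [IntegrableOn, hsplit] using integrableOn_pow_mul_exp_sum hd ht₀ k
  · simpa only [IntegrableOn, hsplit_deriv] using integrableOn_pow_mul_exp_sum hd hlead (k + m)

theorem stmt3 (d : ℕ) (hd : 1 ≤ d) (θ : ℕ → ℝ) (hθ : θ d < 0)
    (i : ℕ) (hi1 : 1 ≤ i) (hid : i ≤ d) :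
    deriv (fun t => ∫ x in Set.Ioi (0:ℝ),
        Real.exp (∑ j ∈ Finset.Icc 1 d, Function.update θ i t j * x ^ j)) (θ i)
    = iteratedDeriv i (fun t => ∫ x in Set.Ioi (0:ℝ),
        Real.exp (∑ j ∈ Finset.Icc 1 d, Function.update θ 1 t j * x ^ j)) (θ 1) := by
  have hmoment_zero (m : ℕ) : (fun t => ∫ x in Set.Ioi (0 : ℝ),
      exp (∑ j ∈ Icc 1 d, Function.update θ m t j * x ^ j))
      = fun t => expPolyMoment d (Function.update θ m t) 0 := by
    simp only [expPolyMoment, pow_zero, one_mul]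
  have hU : IsOpen {t | Function.update θ 1 t d < 0} :=
    isOpen_lt (continuous_update_apply θ 1 d) continuous_const
  have hθ' (m : ℕ) : Function.update θ m (θ m) d < 0 := by rwa [Function.update_eq_self]
  rw [hmoment_zero, hmoment_zero,
    (hasDerivAt_expPolyMoment_update (mem_Icc.2 ⟨hi1, hid⟩) θ 0 (hθ' i)).deriv,
    iteratedDeriv_eqOn_of_hasDerivAt (f := fun k t => expPolyMoment d (Function.update θ 1 t) k) hU
      (fun k _ ht => hasDerivAt_expPolyMoment_update (mem_Icc.2 ⟨le_rfl, hd⟩) θ k ht) i (hθ' 1)]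
  simp only [Function.update_eq_self, zero_add]
end

section
/- Let d ≥ 1 and θ = (θ₁,…,θ_d) with θ_d < 0, and A(θ) = ∫₀^∞ exp(θ₁ x + ⋯ + θ_d x^d) dx. Then A satisfies the differential equation (θ₁ + 2θ₂ ∂₁ + 3θ₃ ∂₁² + ⋯ + d θ_d ∂₁^{d-1}) A(θ) = -1, where ∂₁ is differentiation with respect to θ₁. -/
/-
Write `P(x) = θ₁x + ⋯ + θ_d x^d`. Since `θ_d < 0`, `P(x) ≤ (θ_d/2)·x` for large `x`, so every
`x^i·exp(P(x))` is integrable on `(0,∞)` and the integrals `∫ x^i·exp(t x)·exp(P(x) - θ₁x) dx` may be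
differentiated in `t` under the integral sign: `∂₁^i A(θ) = ∫₀^∞ x^i exp(P(x)) dx`. The left-hand side
is therefore `∫₀^∞ P'(x)·exp(P(x)) dx = [exp(P(x))]₀^∞ = 0 - 1`.
-/

open MeasureTheory Real Set Filter Asymptotics Topology

section
variable {g : ℝ → ℝ}

lemma hasDerivAt_integral_pow_mul_exp_mul
    (hg : ∀ (i : ℕ) (t : ℝ), IntegrableOn (fun x => x ^ i * exp (t * x) * g x) (Ioi 0))
    (i : ℕ) (t₀ : ℝ) :
    HasDerivAt (fun t => ∫ x in Ioi 0, x ^ i * exp (t * x) * g x)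
      (∫ x in Ioi 0, x ^ (i + 1) * exp (t₀ * x) * g x) t₀ := by
  refine (hasDerivAt_integral_of_dominated_loc_of_deriv_le
    (F' := fun t x => x ^ (i + 1) * exp (t * x) * g x) (Metric.ball_mem_nhds t₀ one_pos)
    (Eventually.of_forall fun t => (hg i t).aestronglyMeasurable) (hg i t₀)
    (hg (i + 1) t₀).aestronglyMeasurable
    (bound := fun x => ‖x ^ (i + 1) * exp ((t₀ + 1) * x) * g x‖) ?_
    (hg (i + 1) (t₀ + 1)).norm ?_).2
  · filter_upwards [ae_restrict_mem measurableSet_Ioi] with x (hx : 0 < x) t ht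
    have ht' : t ≤ t₀ + 1 := by
      rw [Metric.mem_ball, Real.dist_eq] at ht
      linarith [le_abs_self (t - t₀)]
    simp only [norm_mul, norm_of_nonneg (exp_pos _).le]
    gcongr
  · filter_upwards with x t _
    refine ((((hasDerivAt_id t).mul_const x).exp.const_mul (x ^ i)).mul_const (g x)).congr_deriv
      ?_
    rw [id, pow_succ]
    ring

lemma iteratedDeriv_integral_exp_mul_mul
    (hg : ∀ (i : ℕ) (t : ℝ), IntegrableOn (fun x => x ^ i * exp (t * x) * g x) (Ioi 0))
    (n : ℕ) :
    iteratedDeriv n (fun t => ∫ x in Ioi 0, exp (t * x) * g x)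
      = fun t => ∫ x in Ioi 0, x ^ n * exp (t * x) * g x := by
  induction n with
  | zero => simp
  | succ n ih =>
    rw [iteratedDeriv_succ, ih]
    exact funext fun t => (hasDerivAt_integral_pow_mul_exp_mul hg n t).deriv

end

section
variable {d : ℕ} {θ : ℕ → ℝ}

lemma eventually_sum_Icc_le_mul (hd : 1 ≤ d) (hθ : θ d < 0) :
    ∀ᶠ x in atTop, ∑ k ∈ Finset.Icc 1 d, θ k * x ^ k ≤ θ d / 2 * x := by
  have hlow : (fun x : ℝ => ∑ k ∈ Finset.Ico 1 d, θ k * x ^ k) =o[atTop] fun x => x ^ d :=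
    IsLittleO.fun_sum fun k hk =>
      (isLittleO_pow_pow_atTop_of_lt (Finset.mem_Ico.mp hk).2).const_mul_left (θ k)
  filter_upwards [hlow.bound (c := -θ d / 2) (by linarith), eventually_ge_atTop 1]
    with x hlow hx
  rw [Real.norm_eq_abs, Real.norm_eq_abs,
    abs_of_nonneg (pow_nonneg (zero_le_one.trans hx) d)] at hlow
  rw [← Finset.Ico_insert_right hd, Finset.sum_insert (by simp)]
  have hxd : x ≤ x ^ d := le_self_pow₀ hx (by omega)
  nlinarith [le_abs_self (∑ k ∈ Finset.Ico 1 d, θ k * x ^ k)]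

lemma tendsto_exp_sum_Icc_atTop (hd : 1 ≤ d) (hθ : θ d < 0) :
    Tendsto (fun x => exp (∑ k ∈ Finset.Icc 1 d, θ k * x ^ k)) atTop (𝓝 0) :=
  tendsto_exp_atBot.comp <| tendsto_atBot_mono' atTop (eventually_sum_Icc_le_mul hd hθ) <|
    tendsto_id.const_mul_atTop_of_neg (by linarith)

lemma integrableOn_pow_mul_exp_sum_Icc (hd : 1 ≤ d) (hθ : θ d < 0) (i : ℕ) :
    IntegrableOn (fun x => x ^ i * exp (∑ k ∈ Finset.Icc 1 d, θ k * x ^ k)) (Ioi 0) := by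
  have hb : 0 < -θ d / 4 := by linarith
  refine integrable_of_isBigO_exp_neg hb (by fun_prop) ?_
  have hexp : (fun x => exp (∑ k ∈ Finset.Icc 1 d, θ k * x ^ k)) =O[atTop]
      fun x => exp (θ d / 2 * x) :=
    IsBigO.of_bound 1 <| by
      filter_upwards [eventually_sum_Icc_le_mul hd hθ] with x hx
      simpa [abs_exp] using hx
  refine ((isLittleO_pow_exp_pos_mul_atTop i hb).isBigO.mul hexp).congr_right fun x => ?_
  rw [← exp_add]
  ring_nf

lemma integral_Ioi_deriv_mul_exp_sum_Icc (hd : 1 ≤ d) (hθ : θ d < 0) :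
    ∫ x in Ioi 0, (∑ j ∈ Finset.Icc 1 d, j * θ j * x ^ (j - 1)) *
      exp (∑ k ∈ Finset.Icc 1 d, θ k * x ^ k) = -1 := by
  have hderiv : ∀ x : ℝ, HasDerivAt (fun x => exp (∑ k ∈ Finset.Icc 1 d, θ k * x ^ k))
      ((∑ j ∈ Finset.Icc 1 d, j * θ j * x ^ (j - 1)) *
        exp (∑ k ∈ Finset.Icc 1 d, θ k * x ^ k)) x := by
    intro x
    convert (HasDerivAt.fun_sum fun k _ => (hasDerivAt_pow k x).const_mul (θ k)).exp using 1
    rw [mul_comm]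
    congr 1
    exact Finset.sum_congr rfl fun j _ => by ring
  have hint : IntegrableOn (fun x => (∑ j ∈ Finset.Icc 1 d, j * θ j * x ^ (j - 1)) *
      exp (∑ k ∈ Finset.Icc 1 d, θ k * x ^ k)) (Ioi 0) := by
    simp_rw [Finset.sum_mul]
    refine integrable_finsetSum _ fun j _ => ?_
    simpa only [mul_assoc] using
      (integrableOn_pow_mul_exp_sum_Icc hd hθ (j - 1)).const_mul ((j : ℝ) * θ j)
  rw [integral_Ioi_of_hasDerivAt_of_tendsto' (fun x _ => hderiv x) hint
    (tendsto_exp_sum_Icc_atTop hd hθ)]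
  have hzero : ∑ k ∈ Finset.Icc 1 d, θ k * (0 : ℝ) ^ k = 0 :=
    Finset.sum_eq_zero fun k hk => by rw [zero_pow (by simp at hk; omega), mul_zero]
  rw [hzero, exp_zero, zero_sub]

lemma sum_Icc_update_one_mul_pow (hd : 1 ≤ d) (θ : ℕ → ℝ) (t x : ℝ) :
    ∑ k ∈ Finset.Icc 1 d, Function.update θ 1 t k * x ^ k
      = t * x + ∑ k ∈ Finset.Icc 2 d, θ k * x ^ k := by
  rw [← Finset.Ioc_insert_left hd, Finset.sum_insert (by simp), ← Finset.Icc_add_one_left_eq_Ioc]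
  simp only [Function.update_self, pow_one]
  congr 1
  exact Finset.sum_congr rfl fun k hk => by
    rw [Function.update_of_ne (by simp at hk; omega)]

lemma iteratedDeriv_integral_exp_sum_Icc_update (hd : 1 ≤ d) (hθ : θ d < 0) {j : ℕ}
    (hj : j ∈ Finset.Icc 1 d) :
    iteratedDeriv (j - 1) (fun t => ∫ x in Ioi 0,
        exp (∑ k ∈ Finset.Icc 1 d, Function.update θ 1 t k * x ^ k)) (θ 1)
      = ∫ x in Ioi 0, x ^ (j - 1) * exp (∑ k ∈ Finset.Icc 1 d, θ k * x ^ k) := by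
  -- For `d = 1` the parameter `t` is the leading coefficient, so the integral is only finite
  -- for `t < 0`; derivatives are needed only for `j ≥ 2`, that is `d ≥ 2`.
  obtain rfl | hj2 : j = 1 ∨ 2 ≤ j := by simp at hj; omega
  · simp
  have hd2 : 2 ≤ d := hj2.trans (Finset.mem_Icc.mp hj).2
  set g := fun x : ℝ => exp (∑ k ∈ Finset.Icc 2 d, θ k * x ^ k)
  have hsplit : ∀ t x : ℝ,
      exp (∑ k ∈ Finset.Icc 1 d, Function.update θ 1 t k * x ^ k) = exp (t * x) * g x :=
    fun t x => by rw [sum_Icc_update_one_mul_pow hd, exp_add]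
  have hg : ∀ (i : ℕ) (t : ℝ), IntegrableOn (fun x => x ^ i * exp (t * x) * g x) (Ioi 0) := by
    intro i t
    have hθt : Function.update θ 1 t d < 0 := by rwa [Function.update_of_ne (by omega)]
    simpa only [hsplit, mul_assoc] using integrableOn_pow_mul_exp_sum_Icc hd hθt i
  simp only [hsplit, iteratedDeriv_integral_exp_mul_mul hg]
  simp only [mul_assoc, ← hsplit, Function.update_eq_self]

end

theorem stmt4 (d : ℕ) (hd : 1 ≤ d) (θ : ℕ → ℝ) (hθ : θ d < 0) :
    ∑ j ∈ Finset.Icc 1 d, (j : ℝ) * θ j *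
      iteratedDeriv (j - 1) (fun t => ∫ x in Set.Ioi (0:ℝ),
        Real.exp (∑ k ∈ Finset.Icc 1 d, Function.update θ 1 t k * x ^ k)) (θ 1)
    = -1 := by
  calc _ = ∑ j ∈ Finset.Icc 1 d, ∫ x in Ioi 0,
        (j : ℝ) * θ j * (x ^ (j - 1) * exp (∑ k ∈ Finset.Icc 1 d, θ k * x ^ k)) :=
        Finset.sum_congr rfl fun j hj => by
          rw [iteratedDeriv_integral_exp_sum_Icc_update hd hθ hj, integral_const_mul]
    _ = ∫ x in Ioi 0, (∑ j ∈ Finset.Icc 1 d, j * θ j * x ^ (j - 1)) *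
        exp (∑ k ∈ Finset.Icc 1 d, θ k * x ^ k) := by
        rw [← integral_finsetSum _ fun j _ =>
          (integrableOn_pow_mul_exp_sum_Icc hd hθ (j - 1)).const_mul _]
        simp_rw [Finset.sum_mul, mul_assoc]
    _ = -1 := integral_Ioi_deriv_mul_exp_sum_Icc hd hθ
end

section
/- Let d ≥ 2 and let P(θ) be the (2d-2)×(2d-2) matrix whose first d-1 rows are the shifted rows (d θ_{d0}, (d-1)θ_{d-1,1}, …, 2θ_{2,d-2}, θ_{1,d-1}) placed at offsets 0,…,d-2 (zeros elsewhere), and whose last d-1 rows are the shifted rows (θ_{d-1,1}, 2θ_{d-2,2}, …, (d-1)θ_{1,d-1}, d θ_{0d}) placed at offsets 0,…,d-2. Let D(θ) be the discriminant of the polynomial p(x;θ) = θ_{d0}x^d + θ_{d-1,1}x^{d-1} + ⋯ + θ_{1,d-1}x + θ_{0d}. Then det P(θ) = d^{d-2} D(θ). -/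
/-!
Write `p = ∑ a_k x^(d-k)`. The identity `d·p − x·p' = ∑ k a_k x^(d-k)` is a row operation on
the Sylvester matrix of `p, p'`: move the `d` rows of `p'` to the top (an even cyclic permutation)
and replace each of the `d - 1` rows of `p` by `d` times itself minus the row of `p'` with the same
offset. This multiplies the determinant by `d^(d-1)`. The new first column is `(d a_0, 0, …, 0)`,
and the complementary minor is exactly `P(θ)`, so `d^(d-1) R(p, p') = d a_0 det P(θ)`.
-/

/-- Sylvester matrix of a degree-`d` polynomial `p` (with descending coefficients
`a 0, a 1, …, a d`, so `p x = ∑ k, a k * x ^ (d - k)`) and its derivative `p'`: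
the first `d - 1` rows carry the shifted coefficients of `p`, the last `d` rows
carry the shifted coefficients of `p'`. -/
def sylvPP' (d : ℕ) (a : ℕ → ℝ) : Matrix (Fin (2 * d - 1)) (Fin (2 * d - 1)) ℝ :=
  fun r c =>
    if (r : ℕ) < d - 1 then
      (if (r : ℕ) ≤ (c : ℕ) ∧ (c : ℕ) ≤ (r : ℕ) + d then a ((c : ℕ) - (r : ℕ)) else 0)
    else
      (if (r : ℕ) - (d - 1) ≤ (c : ℕ) ∧ (c : ℕ) ≤ (r : ℕ) - (d - 1) + (d - 1) then
        ((d : ℝ) - ((c : ℕ) - ((r : ℕ) - (d - 1)))) * a ((c : ℕ) - ((r : ℕ) - (d - 1)))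
      else 0)

/-- The `(2d-2) × (2d-2)` coefficient matrix of the Pfaffian system of the bivariate
exponential-polynomial distribution: the first `d-1` rows are the shifted rows
`(d θ_{d,0}, (d-1) θ_{d-1,1}, …, θ_{1,d-1})` and the last `d-1` rows are the shifted
rows `(θ_{d-1,1}, 2 θ_{d-2,2}, …, d θ_{0,d})`. -/
def Pmat (d : ℕ) (θ : ℕ → ℕ → ℝ) : Matrix (Fin (2 * d - 2)) (Fin (2 * d - 2)) ℝ :=
  fun r c =>
    if (r : ℕ) < d - 1 then
      (if (r : ℕ) ≤ (c : ℕ) ∧ (c : ℕ) ≤ (r : ℕ) + (d - 1) then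
        ((d : ℝ) - ((c : ℕ) - (r : ℕ))) * θ (d - ((c : ℕ) - (r : ℕ))) ((c : ℕ) - (r : ℕ))
      else 0)
    else
      (if (r : ℕ) - (d - 1) ≤ (c : ℕ) ∧ (c : ℕ) ≤ (r : ℕ) - (d - 1) + (d - 1) then
        ((((c : ℕ) - ((r : ℕ) - (d - 1))) : ℝ) + 1) *
          θ (d - 1 - ((c : ℕ) - ((r : ℕ) - (d - 1)))) (((c : ℕ) - ((r : ℕ) - (d - 1))) + 1)
      else 0)

open Matrix

section ShiftedRow
variable {R : Type*} [Zero R]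

def shiftedRow (f : ℕ → R) (s c : ℕ) : R := if s ≤ c then f (c - s) else 0

lemma shiftedRow_succ_succ (f : ℕ → R) (s c : ℕ) :
    shiftedRow f (s + 1) (c + 1) = shiftedRow f s c := by
  simp [shiftedRow]

lemma shiftedRow_succ_right {f : ℕ → R} (hf : f 0 = 0) (s c : ℕ) :
    shiftedRow f s (c + 1) = shiftedRow (fun k => f (k + 1)) s c := by
  unfold shiftedRow
  split_ifs with h₁ h₂ h₂
  · rw [Nat.sub_add_comm h₂]
  · rw [show c + 1 - s = 0 by omega, hf]
  · omega
  · rfl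

end ShiftedRow

section RowOperation
variable {R : Type*} [CommRing R] {N : ℕ}

def scaleSubShift (N t : ℕ) (x : R) : Matrix (Fin N) (Fin N) R :=
  diagonal (fun i : Fin N => if t ≤ (i : ℕ) then x else 1) -
    of fun i k : Fin N => if (k : ℕ) + t = i then 1 else 0

lemma scaleSubShift_mul_apply {n : Type*} (t : ℕ) (x : R) (A : Matrix (Fin N) n R)
    (i : Fin N) (j : n) :
    (scaleSubShift N t x * A) i j =
      if h : t ≤ (i : ℕ) then x * A i j - A ⟨i - t, by omega⟩ j else A i j := by
  rw [scaleSubShift, Matrix.sub_mul, Matrix.sub_apply, diagonal_mul, mul_apply]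
  split_ifs with h
  · rw [Finset.sum_eq_single ⟨i - t, by omega⟩]
    · simp [Nat.sub_add_cancel h]
    · intro k _ hk
      rw [of_apply, if_neg fun hki => hk (Fin.ext (by simp; omega)), zero_mul]
    · simp
  · simp only [of_apply, one_mul]
    rw [Finset.sum_eq_zero fun k _ => by rw [if_neg (by omega), zero_mul], sub_zero]

lemma det_scaleSubShift {t : ℕ} (ht : 0 < t) (x : R) :
    (scaleSubShift N t x).det = x ^ (N - t) := by
  have hlower : (scaleSubShift N t x).BlockTriangular OrderDual.toDual := by
    intro i j hij
    have : (i : ℕ) < j := hij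
    simp [scaleSubShift, Fin.ne_of_lt this, show (j : ℕ) + t ≠ i by omega]
  rw [det_of_isLowerTriangular _ hlower]
  simp only [scaleSubShift, Matrix.sub_apply, diagonal_apply_eq, of_apply, add_eq_left, ht.ne',
    if_false, sub_zero]
  rw [Fin.prod_univ_eq_prod_range (fun k => if t ≤ k then x else 1), Finset.prod_ite,
    Finset.prod_const_one, mul_one, Finset.prod_const, Finset.range_eq_Ico, Finset.Ico_filter_le,
    Nat.card_Ico, max_eq_right (Nat.zero_le t)]

end RowOperation

lemma Equiv.Perm.sign_finCycle {n : ℕ} (k : Fin n) :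
    Equiv.Perm.sign (finCycle k) = (-1) ^ ((n - 1) * k) := by
  have hpow : finCycle k = finRotate n ^ (k : ℕ) := by
    ext i
    rw [finCycle_eq_finRotate_iterate, Equiv.Perm.coe_pow]
  rw [hpow, map_pow, sign_finRotate, pow_mul]

/- `a k` is the coefficient of `x^(d-k)` in `p`; `derivCoeff d a k` is then the coefficient of
`x^(d-1-k)` in `p'`, and the padding with zeros lets both be read off along shifted rows. -/
def paddedCoeff (d : ℕ) (a : ℕ → ℝ) (k : ℕ) : ℝ := if k ≤ d then a k else 0

def derivCoeff (d : ℕ) (a : ℕ → ℝ) (k : ℕ) : ℝ := ((d : ℝ) - k) * paddedCoeff d a k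

/- In `sylvPP'` and `Pmat` the differences inside the real factors are elaborated in `ℝ`, not as
truncated differences in `ℕ`. -/
lemma ite_band_eq_shiftedRow_derivCoeff (d : ℕ) (a : ℕ → ℝ) (s c : ℕ) :
    (if s ≤ c ∧ c ≤ s + (d - 1) then ((d : ℝ) - ((c : ℝ) - s)) * a (c - s) else 0) =
      shiftedRow (derivCoeff d a) s c := by
  by_cases hs : s ≤ c
  · have hk : ((c - s : ℕ) : ℝ) = c - s := Nat.cast_sub hs
    by_cases hc : c ≤ s + (d - 1)
    · simp [shiftedRow, derivCoeff, paddedCoeff, hs, hc, hk, show c - s ≤ d by omega]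
    · rcases (show c - s = d ∨ d < c - s by omega) with hd | hd
      · simp [shiftedRow, derivCoeff, paddedCoeff, hs, hc, hd]
      · simp [shiftedRow, derivCoeff, paddedCoeff, hs, hc, hd.not_ge]
  · simp [shiftedRow, hs]

lemma sylvPP'_apply (d : ℕ) (a : ℕ → ℝ) (r c : Fin (2 * d - 1)) :
    sylvPP' d a r c =
      if (r : ℕ) < d - 1 then shiftedRow (paddedCoeff d a) r c
      else shiftedRow (derivCoeff d a) (r - (d - 1)) c := by
  have hd : 1 ≤ d := by have := r.isLt; omega
  by_cases hr : (r : ℕ) < d - 1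
  · rw [sylvPP', if_pos hr, if_pos hr]
    by_cases hs : (r : ℕ) ≤ c
    · rw [shiftedRow, if_pos hs, paddedCoeff]
      exact if_congr (by omega) rfl rfl
    · simp [shiftedRow, hs]
  · rw [sylvPP', if_neg hr, if_neg hr, ← ite_band_eq_shiftedRow_derivCoeff,
      Nat.cast_sub (by omega), Nat.cast_sub hd, Nat.cast_one]

lemma Pmat_apply (d : ℕ) (θ : ℕ → ℕ → ℝ) (r c : Fin (2 * d - 2)) :
    Pmat d θ r c =
      if (r : ℕ) < d - 1 then shiftedRow (derivCoeff d fun k => θ (d - k) k) r c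
      else shiftedRow (fun k => ((k : ℝ) + 1) * paddedCoeff d (fun k => θ (d - k) k) (k + 1))
        (r - (d - 1)) c := by
  have hd : 1 ≤ d := by have := r.isLt; omega
  by_cases hr : (r : ℕ) < d - 1
  · rw [Pmat, if_pos hr, if_pos hr, ← ite_band_eq_shiftedRow_derivCoeff]
  · rw [Pmat, if_neg hr, if_neg hr]
    set s := (r : ℕ) - (d - 1)
    have hrs : ((r : ℝ) - ((d : ℝ) - 1)) = s := by
      rw [Nat.cast_sub (by omega), Nat.cast_sub hd, Nat.cast_one]
    by_cases hs : s ≤ c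
    · by_cases hc : (c : ℕ) ≤ s + (d - 1)
      · simp [shiftedRow, paddedCoeff, hs, hc, hrs, Nat.cast_sub hs,
          show (c : ℕ) - s + 1 ≤ d by omega,
          show d - 1 - ((c : ℕ) - s) = d - ((c : ℕ) - s + 1) by omega]
      · simp [shiftedRow, paddedCoeff, hs, hc, show ¬(c : ℕ) - s + 1 ≤ d by omega]
    · simp [shiftedRow, hs]

/- `d·p − x·p' = ∑ k a_k x^(d-k)`, row by row. -/
lemma natCast_mul_shiftedRow_sub_derivCoeff (d : ℕ) (a : ℕ → ℝ) (s c : ℕ) :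
    (d : ℝ) * shiftedRow (paddedCoeff d a) s c - shiftedRow (derivCoeff d a) s c =
      shiftedRow (fun k => (k : ℝ) * paddedCoeff d a k) s c := by
  unfold shiftedRow derivCoeff
  split_ifs <;> ring

lemma val_finCycle_pred {d : ℕ} (hd : 0 < d) (i : Fin (2 * d - 1)) :
    (finCycle (⟨d - 1, by omega⟩ : Fin (2 * d - 1)) i : ℕ) =
      if (i : ℕ) < d then i + (d - 1) else i - d := by
  have hi := i.isLt
  rw [finCycle_apply, Fin.val_add]
  dsimp only
  split_ifs with h
  · exact Nat.mod_eq_of_lt (by omega)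
  · rw [Nat.mod_eq_sub_mod (by omega), Nat.mod_eq_of_lt (by omega)]
    omega

lemma Equiv.Perm.sign_finCycle_pred {d : ℕ} (hd : 0 < d) :
    Equiv.Perm.sign (finCycle (⟨d - 1, by omega⟩ : Fin (2 * d - 1))) = 1 := by
  rw [sign_finCycle]
  exact Even.neg_one_pow (Nat.even_mul.2 (Or.inl ⟨d - 1, by omega⟩))

/- The Sylvester matrix after the row operations: first the `d` rows of `p'`, then the `d - 1`
rows of `d·p − x·p'`. -/
def reducedSylvester (d : ℕ) (a : ℕ → ℝ) : Matrix (Fin (2 * d - 1)) (Fin (2 * d - 1)) ℝ :=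
  of fun i j =>
    if (i : ℕ) < d then shiftedRow (derivCoeff d a) i j
    else shiftedRow (fun k => (k : ℝ) * paddedCoeff d a k) (i - d) j

lemma scaleSubShift_mul_sylvPP' {d : ℕ} (hd : 0 < d) (a : ℕ → ℝ) :
    scaleSubShift (2 * d - 1) d (d : ℝ) *
        (sylvPP' d a).submatrix (finCycle ⟨d - 1, by omega⟩) id = reducedSylvester d a := by
  ext i j
  have hi := i.isLt
  rw [scaleSubShift_mul_apply]
  by_cases h : d ≤ (i : ℕ)
  · rw [dif_pos h]
    simp only [submatrix_apply, id_eq, sylvPP'_apply, val_finCycle_pred hd, reducedSylvester,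
      of_apply, if_neg (show ¬(i : ℕ) < d by omega), if_pos (show (i : ℕ) - d < d by omega),
      if_pos (show (i : ℕ) - d < d - 1 by omega),
      if_neg (show ¬(i : ℕ) - d + (d - 1) < d - 1 by omega)]
    rw [show (i : ℕ) - d + (d - 1) - (d - 1) = i - d by omega,
      natCast_mul_shiftedRow_sub_derivCoeff]
  · rw [dif_neg h]
    simp only [submatrix_apply, id_eq, sylvPP'_apply, val_finCycle_pred hd, reducedSylvester,
      of_apply, if_pos (show (i : ℕ) < d by omega),
      if_neg (show ¬(i : ℕ) + (d - 1) < d - 1 by omega)]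
    rw [show (i : ℕ) + (d - 1) - (d - 1) = i by omega]

lemma det_reducedSylvester {d : ℕ} (hd : 0 < d) (a : ℕ → ℝ) :
    (reducedSylvester d a).det = (d : ℝ) ^ (d - 1) * (sylvPP' d a).det := by
  rw [← scaleSubShift_mul_sylvPP' hd, det_mul, det_scaleSubShift hd, det_permute,
    Equiv.Perm.sign_finCycle_pred hd]
  simp [show 2 * d - 1 - d = d - 1 by omega]

lemma reducedSylvester_zero_zero (m : ℕ) (a : ℕ → ℝ) :
    reducedSylvester (m + 1) a (0 : Fin (2 * m + 1)) (0 : Fin (2 * m + 1)) =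
      ((m + 1 : ℕ) : ℝ) * a 0 := by
  simp [reducedSylvester, shiftedRow, derivCoeff, paddedCoeff]

lemma reducedSylvester_succ_zero (m : ℕ) (a : ℕ → ℝ) (i : Fin (2 * m)) :
    reducedSylvester (m + 1) a i.succ (0 : Fin (2 * m + 1)) = 0 := by
  rw [reducedSylvester, of_apply]
  split_ifs <;> simp [shiftedRow]

lemma reducedSylvester_submatrix_succ_succ (m : ℕ) (θ : ℕ → ℕ → ℝ) :
    (reducedSylvester (m + 1) fun k => θ (m + 1 - k) k).submatrix
        (Fin.succ : Fin (2 * m) → Fin (2 * m + 1)) Fin.succ = Pmat (m + 1) θ := by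
  ext i j
  rw [submatrix_apply, Pmat_apply, reducedSylvester, of_apply]
  simp only [Fin.val_succ, Nat.add_sub_cancel]
  by_cases hi : (i : ℕ) < m
  · rw [if_pos (by omega), if_pos hi, shiftedRow_succ_succ]
  · rw [if_neg (by omega), if_neg hi, show (i : ℕ) + 1 - (m + 1) = i - m by omega,
      shiftedRow_succ_right (by simp)]
    push_cast
    rfl

lemma det_reducedSylvester_eq_mul_det_Pmat (m : ℕ) (θ : ℕ → ℕ → ℝ) :
    (reducedSylvester (m + 1) fun k => θ (m + 1 - k) k).det =
      ((m + 1 : ℕ) : ℝ) * θ (m + 1) 0 * (Pmat (m + 1) θ).det := by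
  have hminor := congrArg det (reducedSylvester_submatrix_succ_succ m θ)
  rw [det_succ_column_zero (n := 2 * m), Fin.sum_univ_succ]
  simp only [reducedSylvester_zero_zero, reducedSylvester_succ_zero, Fin.succAbove_zero,
    Fin.val_zero, pow_zero, one_mul, Nat.sub_zero, mul_zero, zero_mul, Finset.sum_const_zero,
    add_zero]
  exact congrArg _ hminor

theorem natCast_pow_mul_det_sylvPP' {d : ℕ} (hd : 0 < d) (θ : ℕ → ℕ → ℝ) :
    (d : ℝ) ^ (d - 1) * (sylvPP' d fun k => θ (d - k) k).det =
      d * θ d 0 * (Pmat d θ).det := by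
  obtain ⟨m, rfl⟩ : ∃ m, d = m + 1 := ⟨d - 1, by omega⟩
  rw [← det_reducedSylvester hd, det_reducedSylvester_eq_mul_det_Pmat]

theorem stmt13 (d : ℕ) (hd : 2 ≤ d) (θ : ℕ → ℕ → ℝ) (hlead : θ d 0 ≠ 0) :
    (Pmat d θ).det
      = (d : ℝ) ^ (d - 2) * ((sylvPP' d (fun k => θ (d - k) k)).det / θ d 0) := by
  have key := natCast_pow_mul_det_sylvPP' (by omega : 0 < d) θ
  rw [show d - 1 = d - 2 + 1 by omega, pow_succ'] at key
  have hd0 : (d : ℝ) ≠ 0 := by exact_mod_cast (by omega : d ≠ 0)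
  rw [← mul_div_assoc, eq_div_iff hlead]
  apply mul_left_cancel₀ hd0
  linear_combination -key
end
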